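/- Let K be a cone field on a topological real vector bundle (E,p,M) over a paracompact topological manifold M without boundary, and order the space Γ⁰(E) of continuous sections by σ₁ ≤ σ₂ iff σ₂ − σ₁ ∈ K⁰_Γ. Then (Γ⁰(E), ≤) is an ordered vector space that is directed on both sides: for any σ₁, σ₂ ∈ Γ⁰(E) there exist σ, σ' ∈ Γ⁰(E) with σ ≤ σ₁ ≤ σ' and σ ≤ σ₂ ≤ σ'. -/

import Mathlib

/-!
The order axioms hold fiberwise by (K1). For directedness it suffices to dominate a continuous
section `δ` (here `σ₁ - σ₂`) by a continuous positive section `τ`: then `σ₁ - τ` and `σ₂ + τ` are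
common lower and upper bounds. Locally, solidity of `K x₀` gives `w` with `w` and `w - δ x₀`
interior to `K x₀`; extending `w` through a trivialization and using (K2), both conditions persist
near `x₀`. The conditions `τ x ∈ K x`, `τ x - δ x ∈ K x` are convex, so a partition of unity on the
paracompact base glues the local solutions.
-/

open Bundle Topology Set

/-- A *cone field* on a topological real vector bundle `(E, p, M)`:
to each `x ∈ M` it assigns a subset `K x` of the fiber `E x` such that
(K1) each `K x` is a convex cone, closed in the fiber, pointed and solid, and
(K2) the union of the fiberwise interiors and the union of the fiberwise
complements are open in the total space. -/
structure IsConeField (F : Type*) [NormedAddCommGroup F] [NormedSpace ℝ F]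
    {M : Type*} [TopologicalSpace M]
    (E : M → Type*) [∀ x, AddCommGroup (E x)] [∀ x, Module ℝ (E x)]
    [∀ x, TopologicalSpace (E x)] [TopologicalSpace (Bundle.TotalSpace F E)]
    [FiberBundle F E] [VectorBundle ℝ F E]
    (K : ∀ x, Set (E x)) : Prop where
  add_mem : ∀ x, ∀ v ∈ K x, ∀ w ∈ K x, v + w ∈ K x
  smul_mem : ∀ x, ∀ c : ℝ, 0 ≤ c → ∀ v ∈ K x, c • v ∈ K x
  isClosed : ∀ x, IsClosed (K x)
  pointed : ∀ x, K x ∩ -(K x) = {0}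
  solid : ∀ x, (interior (K x)).Nonempty
  isOpen_int : IsOpen {p : Bundle.TotalSpace F E | p.2 ∈ interior (K p.proj)}
  isOpen_compl : IsOpen {p : Bundle.TotalSpace F E | p.2 ∉ K p.proj}

variable (F : Type*) [NormedAddCommGroup F] [NormedSpace ℝ F]
  {M : Type*} [TopologicalSpace M]
  (E : M → Type*) [∀ x, AddCommGroup (E x)] [∀ x, Module ℝ (E x)]
  [∀ x, TopologicalSpace (E x)] [TopologicalSpace (Bundle.TotalSpace F E)]
  [FiberBundle F E] [VectorBundle ℝ F E]

/-- A (set-theoretic) section `σ` of the bundle is a *continuous section*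
if `x ↦ (x, σ x)` is continuous into the total space. -/
def IsContSection (σ : ∀ x, E x) : Prop :=
  Continuous (fun x => (⟨x, σ x⟩ : Bundle.TotalSpace F E))

variable {F E} in
/-- `σ` is a *positive section* for the cone field `K` if `σ x ∈ K x` for all `x`. -/
def IsPosSection (K : ∀ x, Set (E x)) (σ : ∀ x, E x) : Prop :=
  ∀ x, σ x ∈ K x

variable {F E} in
/-- The order relation on sections induced by the cone of positive sections:
`σ₁ ≤ σ₂` iff `σ₂ - σ₁` is a positive section. -/
def ConeLE (K : ∀ x, Set (E x)) (σ₁ σ₂ : ∀ x, E x) : Prop :=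
  ∀ x, σ₂ x - σ₁ x ∈ K x

variable {F E} in
/-- `σ` is *`ζ`-measurable*: there is `λ ≥ 0` with `-λ ζ ≤ σ ≤ λ ζ` in the cone order. -/
def IsZetaMeas (K : ∀ x, Set (E x)) (ζ σ : ∀ x, E x) : Prop :=
  ∃ lam : ℝ, 0 ≤ lam ∧ ConeLE K (fun x => (-lam) • ζ x) σ ∧ ConeLE K σ (fun x => lam • ζ x)

variable {F E} in
/-- The norm `|σ|⁰_ζ = min {λ ≥ 0 | -λζ ≤ σ ≤ λζ}` (as an infimum; the
minimum is attained, see the corresponding statement). -/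
noncomputable def zetaNorm (K : ∀ x, Set (E x)) (ζ σ : ∀ x, E x) : ℝ :=
  sInf {lam : ℝ | 0 ≤ lam ∧ ConeLE K (fun x => (-lam) • ζ x) σ ∧ ConeLE K σ (fun x => lam • ζ x)}

/-- The graph (Whitney `C⁰`) topology `WO⁰`, generated by the sets
`W(U) = {σ | ∀ x, (x, σ x) ∈ U}` for `U` open in the total space. -/
def WO0 : TopologicalSpace (∀ x, E x) :=
  TopologicalSpace.generateFrom
    {S | ∃ U : Set (Bundle.TotalSpace F E), IsOpen U ∧
      S = {σ : ∀ x, E x | ∀ x, (⟨x, σ x⟩ : Bundle.TotalSpace F E) ∈ U}}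

/-- The space `Γ⁰(E)` of continuous sections of the bundle. -/
def ContSection : Type _ := {σ : ∀ x, E x // IsContSection F E σ}

open Filter
open scoped Pointwise

section BundleSections

variable {F E} {x₀ : M} {s t : ∀ x, E x}

theorem continuousAt_section_iff_continuousLinearMapAt :
    ContinuousAt (fun x => TotalSpace.mk' F x (s x)) x₀ ↔
      ContinuousAt (fun x => (trivializationAt F E x₀).continuousLinearMapAt ℝ x (s x)) x₀ := by
  rw [FiberBundle.continuousAt_section]
  refine continuousAt_congr ?_
  filter_upwards [(trivializationAt F E x₀).open_baseSet.mem_nhds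
    (mem_baseSet_trivializationAt F E x₀)] with x hx
  exact (Trivialization.continuousLinearMapAt_apply_of_mem ℝ _ hx (s x)).symm

theorem ContinuousAt.add_section
    (hs : ContinuousAt (fun x => TotalSpace.mk' F x (s x)) x₀)
    (ht : ContinuousAt (fun x => TotalSpace.mk' F x (t x)) x₀) :
    ContinuousAt (fun x => TotalSpace.mk' F x (s x + t x)) x₀ := by
  rw [continuousAt_section_iff_continuousLinearMapAt] at hs ht ⊢
  simp only [map_add]
  exact hs.add ht

theorem ContinuousAt.sub_section
    (hs : ContinuousAt (fun x => TotalSpace.mk' F x (s x)) x₀)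
    (ht : ContinuousAt (fun x => TotalSpace.mk' F x (t x)) x₀) :
    ContinuousAt (fun x => TotalSpace.mk' F x (s x - t x)) x₀ := by
  rw [continuousAt_section_iff_continuousLinearMapAt] at hs ht ⊢
  simp only [map_sub]
  exact hs.sub ht

theorem ContinuousAt.smul_section {f : M → ℝ} (hf : ContinuousAt f x₀)
    (hs : ContinuousAt (fun x => TotalSpace.mk' F x (s x)) x₀) :
    ContinuousAt (fun x => TotalSpace.mk' F x (f x • s x)) x₀ := by
  rw [continuousAt_section_iff_continuousLinearMapAt] at hs ⊢
  simp only [map_smul]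
  exact hf.smul hs

theorem ContinuousAt.finset_sum_section {ι : Type*} (I : Finset ι) {s : ι → ∀ x, E x}
    (hs : ∀ i ∈ I, ContinuousAt (fun x => TotalSpace.mk' F x (s i x)) x₀) :
    ContinuousAt (fun x => TotalSpace.mk' F x (∑ i ∈ I, s i x)) x₀ := by
  simp_rw [continuousAt_section_iff_continuousLinearMapAt] at hs ⊢
  simp only [map_sum]
  exact tendsto_finsetSum I hs

theorem IsContSection.add (hs : IsContSection F E s) (ht : IsContSection F E t) :
    IsContSection F E fun x => s x + t x :=
  continuous_iff_continuousAt.2 fun _ =>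
    (Continuous.continuousAt hs).add_section (Continuous.continuousAt ht)

theorem IsContSection.sub (hs : IsContSection F E s) (ht : IsContSection F E t) :
    IsContSection F E fun x => s x - t x :=
  continuous_iff_continuousAt.2 fun _ =>
    (Continuous.continuousAt hs).sub_section (Continuous.continuousAt ht)

theorem isContSection_smul_of_tsupport {ψ : M → ℝ} {U : Set M} (hψ : Continuous ψ)
    (hU : IsOpen U) (hψU : tsupport ψ ⊆ U)
    (hs : ContinuousOn (fun x => TotalSpace.mk' F x (s x)) U) :
    IsContSection F E fun x => ψ x • s x := by
  refine continuous_iff_continuousAt.2 fun x₀ => ?_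
  by_cases hx₀ : x₀ ∈ U
  · exact hψ.continuousAt.smul_section (hs.continuousAt (hU.mem_nhds hx₀))
  · refine (Trivialization.continuousAt_zeroSection ℝ x₀).congr ?_
    filter_upwards [(isClosed_tsupport ψ).isOpen_compl.mem_nhds fun h => hx₀ (hψU h)] with x hx
    simp [zeroSection, image_eq_zero_of_notMem_tsupport hx]

theorem IsContSection.finsum_of_locallyFinite {ι : Type*} {s : ι → ∀ x, E x}
    (hfin : LocallyFinite fun i => {x | s i x ≠ 0}) (hs : ∀ i, IsContSection F E (s i)) :
    IsContSection F E fun x => ∑ᶠ i, s i x := by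
  refine continuous_iff_continuousAt.2 fun x₀ => ?_
  obtain ⟨N, hN, hNfin⟩ := hfin x₀
  refine (ContinuousAt.finset_sum_section hNfin.toFinset
    fun i _ => Continuous.continuousAt (hs i)).congr ?_
  filter_upwards [hN] with x hx
  rw [finsum_eq_sum_of_support_subset _ fun i hi => hNfin.mem_toFinset.2 ⟨x, hi, hx⟩]

theorem exists_isContSection_forall_mem_convex_of_local [T2Space M] [ParacompactSpace M]
    {t : ∀ x, Set (E x)} (ht : ∀ x, Convex ℝ (t x))
    (Hloc : ∀ x₀ : M, ∃ U ∈ 𝓝 x₀, ∃ s : ∀ x, E x,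
      ContinuousOn (fun x => TotalSpace.mk' F x (s x)) U ∧ ∀ y ∈ U, s y ∈ t y) :
    ∃ s : ∀ x, E x, IsContSection F E s ∧ ∀ x, s x ∈ t x := by
  choose U hU s hs hst using Hloc
  obtain ⟨ρ, hρ⟩ := PartitionOfUnity.exists_isSubordinate isClosed_univ (fun x => interior (U x))
    (fun _ => isOpen_interior)
    fun x _ => mem_iUnion.2 ⟨x, mem_interior_iff_mem_nhds.2 (hU x)⟩
  refine ⟨fun x => ∑ᶠ i, ρ i x • s i x, ?_, fun x => ?_⟩
  · refine IsContSection.finsum_of_locallyFinite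
      (ρ.locallyFinite.subset fun i x hx => left_ne_zero_of_smul hx) fun i => ?_
    exact isContSection_smul_of_tsupport (ρ i).continuous isOpen_interior (hρ i)
      ((hs i).mono interior_subset)
  · refine (ht x).finsum_mem (ρ.nonneg · x) (ρ.sum_eq_one (mem_univ x)) fun i hi => ?_
    exact hst i x (interior_subset (hρ i (subset_tsupport _ hi)))

end BundleSections

theorem exists_mem_interior_sub_mem_interior {V : Type*} [AddCommGroup V] [Module ℝ V]
    [TopologicalSpace V] [IsTopologicalAddGroup V] [ContinuousSMul ℝ V] {C : Set V}
    (hC : ∀ c : ℝ, 0 < c → c • C ⊆ C) (hsolid : (interior C).Nonempty) (v : V) :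
    ∃ w ∈ interior C, w - v ∈ interior C := by
  obtain ⟨e, he⟩ := hsolid
  have hint : ∀ c : ℝ, 0 < c → c • interior C ⊆ interior C := fun c hc => by
    rw [← interior_smul₀ hc.ne']
    exact interior_mono (hC c hc)
  have hnear : ∀ᶠ t : ℝ in 𝓝 0, e - t • v ∈ interior C := by
    have hcont : Continuous fun t : ℝ => e - t • v := by fun_prop
    exact hcont.continuousAt.preimage_mem_nhds (isOpen_interior.mem_nhds (by simpa using he))
  obtain ⟨t, hte, ht⟩ := ((hnear.filter_mono nhdsWithin_le_nhds).and
    (self_mem_nhdsWithin : Ioi (0 : ℝ) ∈ 𝓝[>] 0)).exists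
  refine ⟨t⁻¹ • e, hint _ (inv_pos.2 ht) (smul_mem_smul_set he), ?_⟩
  have hscale : t⁻¹ • e - v = t⁻¹ • (e - t • v) := by
    rw [smul_sub, smul_smul, inv_mul_cancel₀ ht.ne', one_smul]
  rw [hscale]
  exact hint _ (inv_pos.2 ht) (smul_mem_smul_set hte)

namespace IsConeField

variable {F E} {K : ∀ x, Set (E x)} {σ₁ σ₂ σ₃ : ∀ x, E x}

theorem zero_mem (hK : IsConeField F E K) (x : M) : (0 : E x) ∈ K x :=
  ((hK.pointed x).symm.subset rfl).1

theorem smul_subset (hK : IsConeField F E K) (x : M) {c : ℝ} (hc : 0 ≤ c) : c • K x ⊆ K x := by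
  rintro _ ⟨v, hv, rfl⟩
  exact hK.smul_mem x c hc v hv

theorem convex (hK : IsConeField F E K) (x : M) : Convex ℝ (K x) :=
  fun _ hv _ hw a b ha hb _ => hK.add_mem x _ (hK.smul_mem x a ha _ hv) _ (hK.smul_mem x b hb _ hw)

theorem convex_setOf_mem_sub_mem (hK : IsConeField F E K) (x : M) (d : E x) :
    Convex ℝ {v | v ∈ K x ∧ v - d ∈ K x} := by
  intro v hv w hw a b ha hb hab
  refine ⟨hK.convex x hv.1 hw.1 ha hb hab, ?_⟩
  have hsplit : a • v + b • w - d = a • (v - d) + b • (w - d) := by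
    rw [smul_sub, smul_sub, sub_add_sub_comm, ← add_smul, hab, one_smul]
  rw [hsplit]
  exact hK.convex x hv.2 hw.2 ha hb hab

theorem exists_mem_interior_sub_mem_interior (hK : IsConeField F E K) (x : M) (v : E x) :
    ∃ w ∈ interior (K x), w - v ∈ interior (K x) := by
  -- The fibers carry no topological vector space instances; they are transported from `F`.
  let φ := (trivializationAt F E x).continuousLinearEquivAt ℝ x
    (mem_baseSet_trivializationAt F E x)
  have := Topology.IsInducing.topologicalAddGroup φ φ.toHomeomorph.isInducing
  have := φ.toHomeomorph.isInducing.continuousSMul continuous_id (map_smul φ _ _)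
  exact _root_.exists_mem_interior_sub_mem_interior (fun c hc => hK.smul_subset x hc.le)
    (hK.solid x) v

theorem coneLE_refl (hK : IsConeField F E K) (σ : ∀ x, E x) : ConeLE K σ σ := fun x => by
  simpa only [sub_self] using hK.zero_mem x

theorem coneLE_antisymm (hK : IsConeField F E K) (h₁₂ : ConeLE K σ₁ σ₂) (h₂₁ : ConeLE K σ₂ σ₁) :
    σ₁ = σ₂ := funext fun x => by
  have hpointed : σ₂ x - σ₁ x ∈ K x ∩ -(K x) :=
    ⟨h₁₂ x, by simpa only [Set.mem_neg, neg_sub] using h₂₁ x⟩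
  rw [hK.pointed, mem_singleton_iff, sub_eq_zero] at hpointed
  exact hpointed.symm

theorem coneLE_trans (hK : IsConeField F E K) (h₁₂ : ConeLE K σ₁ σ₂) (h₂₃ : ConeLE K σ₂ σ₃) :
    ConeLE K σ₁ σ₃ := fun x => by
  simpa only [sub_add_sub_cancel'] using hK.add_mem x _ (h₁₂ x) _ (h₂₃ x)

theorem coneLE_smul (hK : IsConeField F E K) {c : ℝ} (hc : 0 ≤ c) (h : ConeLE K σ₁ σ₂) :
    ConeLE K (fun x => c • σ₁ x) (fun x => c • σ₂ x) := fun x => by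
  simpa only [smul_sub] using hK.smul_mem x c hc _ (h x)

theorem exists_local_pos_ge (hK : IsConeField F E K) {δ : ∀ x, E x}
    (hδ : IsContSection F E δ) (x₀ : M) :
    ∃ U ∈ 𝓝 x₀, ∃ τ : ∀ x, E x, ContinuousOn (fun x => TotalSpace.mk' F x (τ x)) U ∧
      ∀ x ∈ U, τ x ∈ K x ∧ τ x - δ x ∈ K x := by
  obtain ⟨w, hw, hwδ⟩ := hK.exists_mem_interior_sub_mem_interior x₀ (δ x₀)
  set e := trivializationAt F E x₀
  set τ : ∀ x, E x := FiberBundle.extend F w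
  have hτ : ContinuousOn (fun x => TotalSpace.mk' F x (τ x)) e.baseSet :=
    e.continuousOn_symm.comp (continuous_id.prodMk continuous_const).continuousOn
      fun _ hx => ⟨hx, mem_univ _⟩
  have hτδ : ContinuousOn (fun x => TotalSpace.mk' F x (τ x - δ x)) e.baseSet := fun x hx =>
    ((hτ.continuousAt (e.open_baseSet.mem_nhds hx)).sub_section
      (Continuous.continuousAt hδ)).continuousWithinAt
  have hU := (hτ.isOpen_inter_preimage e.open_baseSet hK.isOpen_int).inter
    (hτδ.isOpen_inter_preimage e.open_baseSet hK.isOpen_int)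
  have hx₀ : x₀ ∈ e.baseSet := mem_baseSet_trivializationAt F E x₀
  have hτx₀ : τ x₀ = w := FiberBundle.extend_apply_self F w
  refine ⟨_, hU.mem_nhds ⟨⟨hx₀, ?_⟩, hx₀, ?_⟩, τ, hτ.mono fun x hx => hx.1.1,
    fun x hx => ⟨interior_subset hx.1.2, interior_subset hx.2.2⟩⟩
  · simpa only [mem_preimage, mem_ofPred_eq, hτx₀] using hw
  · simpa only [mem_preimage, mem_ofPred_eq, hτx₀] using hwδ

theorem exists_isContSection_pos_ge [T2Space M] [ParacompactSpace M] (hK : IsConeField F E K)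
    {δ : ∀ x, E x} (hδ : IsContSection F E δ) :
    ∃ τ : ∀ x, E x, IsContSection F E τ ∧ IsPosSection K τ ∧ ConeLE K δ τ := by
  obtain ⟨τ, hτ, hτK⟩ := exists_isContSection_forall_mem_convex_of_local
    (fun x => hK.convex_setOf_mem_sub_mem x (δ x)) (hK.exists_local_pos_ge hδ)
  exact ⟨τ, hτ, fun x => (hτK x).1, fun x => (hτK x).2⟩

theorem exists_isContSection_lower_upper_bound [T2Space M] [ParacompactSpace M]
    (hK : IsConeField F E K) (h₁ : IsContSection F E σ₁) (h₂ : IsContSection F E σ₂) :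
    ∃ σ σ' : ∀ x, E x, IsContSection F E σ ∧ IsContSection F E σ' ∧
      ConeLE K σ σ₁ ∧ ConeLE K σ σ₂ ∧ ConeLE K σ₁ σ' ∧ ConeLE K σ₂ σ' := by
  obtain ⟨τ, hτ, hτK, hτδ⟩ := hK.exists_isContSection_pos_ge (h₁.sub h₂)
  refine ⟨fun x => σ₁ x - τ x, fun x => σ₂ x + τ x, h₁.sub hτ, h₂.add hτ, fun x => ?_,
    fun x => ?_, fun x => ?_, fun x => ?_⟩
  · simpa only [sub_sub_cancel] using hτK x
  · rw [sub_sub_eq_add_sub, add_comm]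
    simpa only [sub_sub_eq_add_sub] using hτδ x
  · show σ₂ x + τ x - σ₁ x ∈ K x
    rw [add_comm]
    simpa only [sub_sub_eq_add_sub] using hτδ x
  · simpa only [add_sub_cancel_left] using hτK x

end IsConeField

theorem coneField_sections_orderedVectorSpace_directed
    [T2Space M] [ParacompactSpace M]
    (K : ∀ x, Set (E x)) (hK : IsConeField F E K) :
    (∀ σ : ∀ x, E x, IsContSection F E σ → ConeLE K σ σ) ∧
    (∀ σ₁ σ₂ : ∀ x, E x, IsContSection F E σ₁ → IsContSection F E σ₂ →
      ConeLE K σ₁ σ₂ → ConeLE K σ₂ σ₁ → σ₁ = σ₂) ∧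
    (∀ σ₁ σ₂ σ₃ : ∀ x, E x, IsContSection F E σ₁ → IsContSection F E σ₂ →
      IsContSection F E σ₃ → ConeLE K σ₁ σ₂ → ConeLE K σ₂ σ₃ → ConeLE K σ₁ σ₃) ∧
    (∀ σ₁ σ₂ τ : ∀ x, E x, IsContSection F E σ₁ → IsContSection F E σ₂ →
      IsContSection F E τ → ConeLE K σ₁ σ₂ →
      ConeLE K (fun x => σ₁ x + τ x) (fun x => σ₂ x + τ x)) ∧
    (∀ σ₁ σ₂ : ∀ x, E x, ∀ c : ℝ, 0 ≤ c → IsContSection F E σ₁ → IsContSection F E σ₂ →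
      ConeLE K σ₁ σ₂ → ConeLE K (fun x => c • σ₁ x) (fun x => c • σ₂ x)) ∧
    (∀ σ₁ σ₂ : ∀ x, E x, IsContSection F E σ₁ → IsContSection F E σ₂ →
      ∃ σ σ' : ∀ x, E x, IsContSection F E σ ∧ IsContSection F E σ' ∧
        ConeLE K σ σ₁ ∧ ConeLE K σ σ₂ ∧ ConeLE K σ₁ σ' ∧ ConeLE K σ₂ σ') :=
  ⟨fun σ _ => hK.coneLE_refl σ,
    fun _ _ _ _ => hK.coneLE_antisymm,
    fun _ _ _ _ _ _ => hK.coneLE_trans,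
    fun _ _ _ _ _ _ h x => by simpa only [add_sub_add_right_eq_sub] using h x,
    fun _ _ _ hc _ _ => hK.coneLE_smul hc,
    fun _ _ => hK.exists_isContSection_lower_upper_bound⟩
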